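/- arXiv:2006.16491 — 7 statements merged into one kernel-verified Lean document; each statement's English description precedes it below -/
import Mathlib

section
/- For every positive integer x, π₂(x) = (π(√x) − π(√x)²)/2 + Σ_{p ≤ √x} π(x/p), where the sum runs over all primes p ≤ √x. -/
/-!
Count the pairs of primes `(p, q)` with `p ≤ √x` and `p q ≤ x`: for each `p` there are `π(x/p)`
of them. Those with `p ≤ q` are the factorizations `m = p q` of the semiprimes `m ≤ x`, one for
each `m`. Those with `q < p` satisfy `q < p ≤ √x ≤ x/p` automatically, so they are just the
`C(π(√x), 2)` strictly ordered pairs of primes up to `√x`.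
-/

open Finset

/-- The finite set of primes `p ≤ y` (for a real bound `y`). -/
noncomputable def primesUpTo (y : ℝ) : Finset ℕ :=
  (Finset.range (⌊y⌋₊ + 1)).filter Nat.Prime

/-- The prime counting function `π(x)`: the number of primes `p ≤ x`. -/
noncomputable def primePi (x : ℝ) : ℕ := (primesUpTo x).card

/-- The semiprime counting function `π₂(x)`: the number of `m ≤ x` which are a
product of exactly two primes (counted with multiplicity). -/
noncomputable def pi2 (x : ℝ) : ℕ :=
  ((Finset.range (⌊x⌋₊ + 1)).filter
    (fun m => ArithmeticFunction.cardFactors m = 2)).card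

open scoped ArithmeticFunction.Omega

lemma mem_primesUpTo_div {x p q : ℕ} (hp : 0 < p) :
    q ∈ primesUpTo ((x : ℝ) / p) ↔ q.Prime ∧ p * q ≤ x := by
  simp [primesUpTo, Nat.floor_div_eq_div, Nat.le_div_iff_mul_le hp, mul_comm, and_comm]

lemma mem_primesUpTo_sqrt {x p : ℕ} : p ∈ primesUpTo √x ↔ p.Prime ∧ p * p ≤ x := by
  simp [primesUpTo, Real.nat_floor_real_sqrt_eq_nat_sqrt, Nat.le_sqrt, and_comm]

lemma Nat.primeFactorsList_mul_of_le {p q : ℕ} (hp : p.Prime) (hq : q.Prime) (hpq : p ≤ q) :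
    (p * q).primeFactorsList = [p, q] :=
  ((Nat.primeFactorsList_unique (by simp) (by simp [hp, hq])).symm.eq_of_sortedLE
    (Nat.primeFactorsList_sorted _) (by simpa [List.sortedLE_iff_pairwise] using hpq))

lemma ArithmeticFunction.cardFactors_eq_two_iff {m : ℕ} :
    Ω m = 2 ↔ ∃ p q, p.Prime ∧ q.Prime ∧ p ≤ q ∧ p * q = m := by
  refine ⟨fun h => ?_, ?_⟩
  · obtain ⟨p, q, hl⟩ := List.length_eq_two.mp (cardFactors_apply ▸ h)
    have hm : m ≠ 0 := by rintro rfl; simp at h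
    have hprime : ∀ r ∈ m.primeFactorsList, r.Prime := fun r => Nat.prime_of_mem_primeFactorsList
    have hsorted := Nat.primeFactorsList_sorted m
    rw [hl, List.sortedLE_iff_pairwise] at hsorted
    refine ⟨p, q, hprime p (by simp [hl]), hprime q (by simp [hl]), by simpa using hsorted, ?_⟩
    simpa [hl] using Nat.prod_primeFactorsList hm
  · rintro ⟨p, q, hp, hq, hpq, rfl⟩
    simp [cardFactors_apply, Nat.primeFactorsList_mul_of_le hp hq hpq]

lemma Finset.sum_card_filter_lt {α : Type*} [LinearOrder α] (s : Finset α) :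
    ∑ a ∈ s, #{b ∈ s | b < a} = (#s).choose 2 := by
  rw [← card_product_filter_lt, card_filter, sum_product_right]
  exact sum_congr rfl fun a _ => card_filter _ _

lemma mem_sigma_primesUpTo_iff {x : ℕ} {a : Σ _ : ℕ, ℕ} :
    a ∈ (primesUpTo √x).sigma (fun p => {q ∈ primesUpTo (x / p) | p ≤ q}) ↔
      a.1.Prime ∧ a.2.Prime ∧ a.1 ≤ a.2 ∧ a.1 * a.2 ≤ x := by
  simp only [mem_sigma, mem_filter, mem_primesUpTo_sqrt]
  constructor
  · rintro ⟨⟨hp, -⟩, hq, hpq⟩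
    rw [mem_primesUpTo_div hp.pos] at hq
    exact ⟨hp, hq.1, hpq, hq.2⟩
  · rintro ⟨hp, hq, hpq, hx⟩
    rw [mem_primesUpTo_div hp.pos]
    exact ⟨⟨hp, (Nat.mul_le_mul_left _ hpq).trans hx⟩, ⟨hq, hx⟩, hpq⟩

lemma pi2_natCast_eq_sum (x : ℕ) :
    pi2 x = ∑ p ∈ primesUpTo √x, #{q ∈ primesUpTo (x / p) | p ≤ q} := by
  rw [← card_sigma, pi2, Nat.floor_natCast]
  symm
  refine card_bij (fun a _ => a.1 * a.2) ?_ ?_ ?_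
  · rintro ⟨p, q⟩ ha
    obtain ⟨hp, hq, hpq, hx⟩ := mem_sigma_primesUpTo_iff.mp ha
    simp only [mem_filter, mem_range, Nat.lt_succ_iff]
    exact ⟨hx, ArithmeticFunction.cardFactors_eq_two_iff.mpr ⟨p, q, hp, hq, hpq, rfl⟩⟩
  · rintro ⟨p, q⟩ ha ⟨p', q'⟩ ha' h
    obtain ⟨hp, hq, hpq, -⟩ := mem_sigma_primesUpTo_iff.mp ha
    obtain ⟨hp', hq', hpq', -⟩ := mem_sigma_primesUpTo_iff.mp ha'
    have := congrArg Nat.primeFactorsList h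
    simp only [Nat.primeFactorsList_mul_of_le hp hq hpq,
      Nat.primeFactorsList_mul_of_le hp' hq' hpq', List.cons.injEq, and_true] at this
    obtain ⟨rfl, rfl⟩ := this
    rfl
  · intro m hm
    simp only [mem_filter, mem_range, Nat.lt_succ_iff] at hm
    obtain ⟨hmx, p, q, hp, hq, hpq, rfl⟩ :=
      And.imp_right ArithmeticFunction.cardFactors_eq_two_iff.mp hm
    exact ⟨⟨p, q⟩, mem_sigma_primesUpTo_iff.mpr ⟨hp, hq, hpq, hmx⟩, rfl⟩

lemma primePi_div_eq_card_add_card {x p : ℕ} (hp : p ∈ primesUpTo √x) :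
    primePi (x / p) = #{q ∈ primesUpTo (x / p) | p ≤ q} + #{q ∈ primesUpTo √x | q < p} := by
  rw [mem_primesUpTo_sqrt] at hp
  rw [primePi, ← card_filter_add_card_filter_not (p ≤ ·)]
  congr 2
  ext q
  simp only [mem_filter, mem_primesUpTo_sqrt, mem_primesUpTo_div hp.1.pos, not_le]
  constructor
  · rintro ⟨⟨hq, -⟩, hqp⟩
    exact ⟨⟨hq, (Nat.mul_le_mul hqp.le hqp.le).trans hp.2⟩, hqp⟩
  · rintro ⟨⟨hq, -⟩, hqp⟩
    exact ⟨⟨hq, (Nat.mul_le_mul_left p hqp.le).trans hp.2⟩, hqp⟩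

lemma pi2_add_choose_two_eq_sum (x : ℕ) :
    pi2 x + (primePi √x).choose 2 = ∑ p ∈ primesUpTo √x, primePi (x / p) := by
  rw [pi2_natCast_eq_sum, primePi, ← sum_card_filter_lt, ← sum_add_distrib]
  exact sum_congr rfl fun p hp => (primePi_div_eq_card_add_card hp).symm

theorem stmt0_general (x : ℕ) :
    (pi2 x : ℝ) =
      ((primePi (Real.sqrt x) : ℝ) - (primePi (Real.sqrt x) : ℝ) ^ 2) / 2
        + ∑ p ∈ primesUpTo (Real.sqrt x), (primePi ((x : ℝ) / (p : ℝ)) : ℝ) := by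
  have h := congrArg (Nat.cast : ℕ → ℝ) (pi2_add_choose_two_eq_sum x)
  push_cast [Nat.cast_choose_two] at h
  linarith

theorem stmt0 (x : ℕ) (hx : 0 < x) :
    (pi2 x : ℝ) =
      ((primePi (Real.sqrt x) : ℝ) - (primePi (Real.sqrt x) : ℝ) ^ 2) / 2
        + ∑ p ∈ primesUpTo (Real.sqrt x), (primePi ((x : ℝ) / (p : ℝ)) : ℝ) :=
  stmt0_general x
end

section
/- Let n ≥ 1 be an integer and suppose there is a constant c > 0 such that |π(y) − α_n(y)| ≤ c·y/(log y)^{n+1} for all real y ≥ 2. Then Σ_{p ≤ √x} π(x/p) = Σ_{p ≤ √x} α_n(x/p) + O(x·log(log x)/(log x)^{n+1}) as x → ∞. -/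
/-!
For `p ≤ √x` we have `x / p ≥ √x`, so `log (x / p) ≥ (log x) / 2` and the assumed error term at
`x / p` is at most `c 2^(n+1) x / (p (log x)^(n+1))`. Summing over `p ≤ √x` leaves
`x / (log x)^(n+1) · ∑_{p ≤ x} 1/p`, and `∑_{p ≤ y} 1/p ≪ log log y` follows from Chebyshev's
bound `θ(y) ≤ y log 4`: on a dyadic block `2^m < p ≤ 2^(m+1)` one has `1/p ≤ log p / (m 2^m log 2)`,
so the block contributes at most `4 / m`, and summing these gives a harmonic number.
-/

open Finset Filter

/-- `α_n(x) = (x / log x) · ∑_{i=0}^{n-1} i! / (log x)^i`. -/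
noncomputable def alpha (n : ℕ) (x : ℝ) : ℝ :=
  x / Real.log x * ∑ i ∈ Finset.range n, (Nat.factorial i : ℝ) / (Real.log x) ^ i

open Real Asymptotics Chebyshev
open Nat (primesLE primesLE_mono mem_primesLE)

lemma primesUpTo_eq_primesLE (y : ℝ) : primesUpTo y = primesLE ⌊y⌋₊ := rfl

lemma primesUpTo_mono : Monotone primesUpTo := fun _ _ h =>
  primesLE_mono (Nat.floor_mono h)

lemma mem_primesUpTo {y : ℝ} {p : ℕ} (hy : 0 ≤ y) :
    p ∈ primesUpTo y ↔ (p : ℝ) ≤ y ∧ p.Prime := by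
  rw [primesUpTo_eq_primesLE, mem_primesLE, Nat.le_floor_iff hy]

lemma sum_inv_primes_dyadic_le {m : ℕ} (hm : 1 ≤ m) :
    ∑ p ∈ primesLE (2 ^ (m + 1)) \ primesLE (2 ^ m), (p : ℝ)⁻¹ ≤ 4 / m := by
  have hlog2 : 0 < log 2 := log_pos one_lt_two
  set D : ℝ := m * log 2 * 2 ^ m
  have hD : 0 < D := by positivity
  have hterm : ∀ p ∈ primesLE (2 ^ (m + 1)) \ primesLE (2 ^ m), (p : ℝ)⁻¹ ≤ log p / D := by
    intro p hp
    have hlt : 2 ^ m < p := by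
      simp only [Finset.mem_sdiff, mem_primesLE, not_and] at hp
      by_contra! hle
      exact hp.2 hle hp.1.2
    have hlt' : (2 : ℝ) ^ m < p := by exact_mod_cast hlt
    have hlogp : m * log 2 ≤ log p := by
      rw [← Real.log_pow]; exact log_le_log (by positivity) hlt'.le
    rw [le_div_iff₀ hD, show D = m * log 2 * 2 ^ m from rfl]
    calc (p : ℝ)⁻¹ * (m * log 2 * 2 ^ m) ≤ (p : ℝ)⁻¹ * (log p * p) := by gcongr
      _ = log p := by field_simp [(lt_trans (by positivity) hlt').ne']
  calc ∑ p ∈ primesLE (2 ^ (m + 1)) \ primesLE (2 ^ m), (p : ℝ)⁻¹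
      ≤ ∑ p ∈ primesLE (2 ^ (m + 1)), log p / D := by
        refine (sum_le_sum hterm).trans (sum_le_sum_of_subset_of_nonneg sdiff_subset ?_)
        intro p _ _
        positivity
    _ = θ ((2 ^ (m + 1) : ℕ) : ℝ) / D := by rw [theta_eq_sum_primesLE_log, sum_div]
    _ ≤ log 4 * 2 ^ (m + 1) / D := by
        gcongr
        exact_mod_cast theta_le_log4_mul_x (by positivity)
    _ = 4 / m := by
        rw [show (4 : ℝ) = 2 ^ 2 by norm_num, Real.log_pow]
        field_simp
        ring

lemma sum_inv_primesLE_two_pow_le (M : ℕ) :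
    ∑ p ∈ primesLE (2 ^ (M + 1)), (p : ℝ)⁻¹ ≤ 1 / 2 + 4 * harmonic M := by
  induction M with
  | zero =>
    have : primesLE 2 = {2} := by decide
    simp [this]
  | succ M ih =>
    rw [← sum_sdiff (primesLE_mono (Nat.pow_le_pow_right two_pos (Nat.le_add_right _ 1)))]
    have hblock := sum_inv_primes_dyadic_le (m := M + 1) (by omega)
    rw [harmonic_succ]
    push_cast at hblock ⊢
    rw [div_eq_mul_inv] at hblock
    linarith

lemma sum_inv_primesUpTo_le {y : ℝ} (hy : 2 ≤ y) :
    ∑ p ∈ primesUpTo y, (p : ℝ)⁻¹ ≤ 1 / 2 + 4 * (1 + log 2 + log (log y)) := by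
  have hlog2 : 1 / 2 < log 2 := by linarith [log_two_gt_d9]
  have hlogy : log 2 ≤ log y := log_le_log two_pos hy
  set M := ⌊log y / log 2⌋₊
  have hM : 1 ≤ M := Nat.le_floor (by rw [Nat.cast_one, le_div_iff₀ (by linarith)]; linarith)
  have hMle : (M : ℝ) ≤ 2 * log y := by
    calc (M : ℝ) ≤ log y / log 2 := Nat.floor_le (div_nonneg (by linarith) (by linarith))
      _ ≤ 2 * log y := by rw [div_le_iff₀ (by linarith)]; nlinarith
  have hy2M : y ≤ ((2 ^ (M + 1) : ℕ) : ℝ) := by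
    have h := Nat.lt_floor_add_one (log y / log 2)
    rw [div_lt_iff₀ (by linarith), ← Nat.cast_succ, ← Real.log_pow] at h
    push_cast
    exact (log_lt_log_iff (by linarith) (by positivity)).mp h |>.le
  have hharm : (harmonic M : ℝ) ≤ 1 + log 2 + log (log y) := by
    calc (harmonic M : ℝ) ≤ 1 + log M := harmonic_le_one_add_log M
      _ ≤ 1 + log (2 * log y) := by gcongr
      _ = 1 + log 2 + log (log y) := by rw [log_mul two_ne_zero (by linarith)]; ring
  calc ∑ p ∈ primesUpTo y, (p : ℝ)⁻¹ ≤ ∑ p ∈ primesLE (2 ^ (M + 1)), (p : ℝ)⁻¹ :=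
        sum_le_sum_of_subset_of_nonneg
          (by simpa only [primesUpTo_eq_primesLE, Nat.floor_natCast] using primesUpTo_mono hy2M)
          fun _ _ _ => by positivity
    _ ≤ 1 / 2 + 4 * harmonic M := sum_inv_primesLE_two_pow_le M
    _ ≤ 1 / 2 + 4 * (1 + log 2 + log (log y)) := by gcongr

lemma isBigO_sum_inv_primesUpTo :
    (fun y => ∑ p ∈ primesUpTo y, (p : ℝ)⁻¹) =O[atTop] fun y => log (log y) := by
  refine IsBigO.of_bound (1 / 2 + 4 * (2 + log 2)) ?_
  filter_upwards [eventually_ge_atTop 2,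
    (tendsto_log_atTop.comp tendsto_log_atTop).eventually_ge_atTop 1] with y hy hloglog
  simp only [Function.comp_apply] at hloglog
  rw [norm_of_nonneg (sum_nonneg fun _ _ => by positivity),
    norm_of_nonneg (zero_le_one.trans hloglog)]
  calc ∑ p ∈ primesUpTo y, (p : ℝ)⁻¹ ≤ 1 / 2 + 4 * (1 + log 2 + log (log y)) :=
        sum_inv_primesUpTo_le hy
    _ ≤ (1 / 2 + 4 * (2 + log 2)) * log (log y) := by
        nlinarith [log_pos one_lt_two]

lemma abs_sub_at_div_prime_le {f g : ℝ → ℝ} {c : ℝ} {k : ℕ} (hc : 0 ≤ c)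
    (h : ∀ y, 2 ≤ y → |f y - g y| ≤ c * y / log y ^ k) {x : ℝ} (hx : 4 ≤ x) {p : ℕ}
    (hp : p ∈ primesUpTo √x) :
    |f (x / p) - g (x / p)| ≤ c * 2 ^ k * x / log x ^ k * (p : ℝ)⁻¹ := by
  have hsqrt : 2 ≤ √x := (le_sqrt two_pos.le (by linarith)).mpr (by linarith)
  obtain ⟨hpx, hprime⟩ := (mem_primesUpTo (by positivity)).mp hp
  have hp0 : (0 : ℝ) < p := by exact_mod_cast hprime.pos
  have hxp : √x ≤ x / p := by
    rw [le_div_iff₀ hp0]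
    calc √x * p ≤ √x * √x := by gcongr
      _ = x := mul_self_sqrt (by linarith)
  have hlog : log x / 2 ≤ log (x / p) := by
    rw [← log_sqrt (by linarith)]
    exact log_le_log (by linarith) hxp
  have hlogx : 0 < log x := log_pos (by linarith)
  calc |f (x / p) - g (x / p)| ≤ c * (x / p) / log (x / p) ^ k := h _ (hsqrt.trans hxp)
    _ ≤ c * (x / p) / (log x / 2) ^ k := by gcongr
    _ = c * 2 ^ k * x / log x ^ k * (p : ℝ)⁻¹ := by rw [div_pow]; field_simp

theorem isBigO_sum_sub_sum_primesUpTo_sqrt {f g : ℝ → ℝ} {c : ℝ} {k : ℕ} (hc : 0 ≤ c)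
    (h : ∀ y, 2 ≤ y → |f y - g y| ≤ c * y / log y ^ k) :
    (fun x => ∑ p ∈ primesUpTo √x, f (x / p) - ∑ p ∈ primesUpTo √x, g (x / p)) =O[atTop]
      fun x => x * log (log x) / log x ^ k := by
  set A : ℝ → ℝ := fun x => c * 2 ^ k * x / log x ^ k
  have hsum : (fun x => ∑ p ∈ primesUpTo √x, f (x / p) - ∑ p ∈ primesUpTo √x, g (x / p))
      =O[atTop] fun x => A x * ∑ p ∈ primesUpTo x, (p : ℝ)⁻¹ := by
    refine IsBigO.of_bound 1 ?_
    filter_upwards [eventually_ge_atTop 4] with x hx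
    have hA : 0 ≤ A x := div_nonneg (by positivity) (pow_nonneg (log_nonneg (by linarith)) k)
    have hS : ∑ p ∈ primesUpTo √x, (p : ℝ)⁻¹ ≤ ∑ p ∈ primesUpTo x, (p : ℝ)⁻¹ :=
      sum_le_sum_of_subset_of_nonneg
        (primesUpTo_mono (sqrt_le_self_iff.mpr (.inr (by linarith)))) fun _ _ _ => by positivity
    rw [norm_of_nonneg (mul_nonneg hA (sum_nonneg fun _ _ => by positivity)), one_mul,
      Real.norm_eq_abs, ← sum_sub_distrib]
    calc |∑ p ∈ primesUpTo √x, (f (x / p) - g (x / p))|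
        ≤ ∑ p ∈ primesUpTo √x, |f (x / p) - g (x / p)| := abs_sum_le_sum_abs _ _
      _ ≤ ∑ p ∈ primesUpTo √x, A x * (p : ℝ)⁻¹ :=
          sum_le_sum fun p hp => abs_sub_at_div_prime_le hc h hx hp
      _ ≤ A x * ∑ p ∈ primesUpTo x, (p : ℝ)⁻¹ := by rw [← mul_sum]; gcongr
  refine hsum.trans (((isBigO_refl A atTop).mul isBigO_sum_inv_primesUpTo).trans ?_)
  exact (isBigO_const_mul_self (c * 2 ^ k) _ atTop).congr_left fun x => by simp only [A]; ring

theorem stmt1_general (n : ℕ)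
    (h : ∃ c : ℝ, 0 < c ∧ ∀ y : ℝ, 2 ≤ y →
      |(primePi y : ℝ) - alpha n y| ≤ c * y / (Real.log y) ^ (n + 1)) :
    (fun x : ℝ =>
        (∑ p ∈ primesUpTo (Real.sqrt x), (primePi (x / (p : ℝ)) : ℝ))
          - ∑ p ∈ primesUpTo (Real.sqrt x), alpha n (x / (p : ℝ)))
      =O[atTop]
    (fun x : ℝ => x * Real.log (Real.log x) / (Real.log x) ^ (n + 1)) := by
  obtain ⟨c, hc, hπ⟩ := h
  exact isBigO_sum_sub_sum_primesUpTo_sqrt (f := fun y => (primePi y : ℝ)) hc.le hπ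

theorem stmt1 (n : ℕ) (hn : 1 ≤ n)
    (h : ∃ c : ℝ, 0 < c ∧ ∀ y : ℝ, 2 ≤ y →
      |(primePi y : ℝ) - alpha n y| ≤ c * y / (Real.log y) ^ (n + 1)) :
    (fun x : ℝ =>
        (∑ p ∈ primesUpTo (Real.sqrt x), (primePi (x / (p : ℝ)) : ℝ))
          - ∑ p ∈ primesUpTo (Real.sqrt x), alpha n (x / (p : ℝ)))
      =O[atTop]
    (fun x : ℝ => x * Real.log (Real.log x) / (Real.log x) ^ (n + 1)) :=
  stmt1_general n h
end

section
/- For every integer n ≥ 1, the series Σ_{i=1}^∞ C(n+i−1, n−1)/(i·2^i) converges and equals q_n + log 2, where C(·,·) denotes the binomial coefficient. -/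
open Finset

/-- The sequence `q_n`: `q_1 = 0` and `q_n = ∑_{i=1}^{n-1} (2^i - 1)/i` for `n ≥ 2`. -/
noncomputable def qseq (n : ℕ) : ℝ :=
  ∑ i ∈ Finset.Icc 1 (n - 1), ((2 : ℝ) ^ i - 1) / (i : ℝ)

/-!
By Pascal's rule, passing from `n` to `n + 1` adds to `∑ C(n+i-1, n-1) xⁱ / i` the series
`∑ C(n+i-1, n) xⁱ / i`. Since `C(n+i-1, n) / i = C(n+i-1, n-1) / n`, the latter is `1 / n` times the
negative binomial series `∑_{i ≥ 1} C(n+i-1, n-1) xⁱ = (1 - x)⁻ⁿ - 1`. Starting from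
`∑ xⁱ / i = -log (1 - x)` at `n = 1` and taking `x = 1/2` gives `log 2` plus the increments
`(2ⁿ - 1) / n`, which add up to `q_n`.
-/

theorem hasSum_choose_mul_pow_succ {𝕜 : Type*} [NormedDivisionRing 𝕜] (n : ℕ) {x : 𝕜}
    (hx : ‖x‖ < 1) :
    HasSum (fun i : ℕ ↦ ((i + 1 + n).choose n : 𝕜) * x ^ (i + 1)) (1 / (1 - x) ^ (n + 1) - 1) := by
  simpa using (hasSum_nat_add_iff' (f := fun i : ℕ ↦ ((i + n).choose n : 𝕜) * x ^ i) 1).2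
    (hasSum_choose_mul_geometric_of_norm_lt_one n hx)

theorem hasSum_choose_succ_mul_pow_succ_div {𝕜 : Type*} [NormedField 𝕜] [CharZero 𝕜] (n : ℕ)
    {x : 𝕜} (hx : ‖x‖ < 1) :
    HasSum (fun i : ℕ ↦ ((i + 1 + n).choose (n + 1) : 𝕜) * x ^ (i + 1) / (i + 1))
      ((1 / (1 - x) ^ (n + 1) - 1) / (n + 1)) := by
  refine ((hasSum_choose_mul_pow_succ n hx).div_const (n + 1)).congr_fun fun i ↦ ?_
  have hnat := Nat.choose_succ_right_eq (i + 1 + n) n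
  rw [Nat.add_sub_cancel] at hnat
  have hchoose : ((i + 1 + n).choose (n + 1) : 𝕜) * (n + 1) = (i + 1 + n).choose n * (i + 1) := by
    exact_mod_cast hnat
  field_simp
  linear_combination x ^ (i + 1) * hchoose

theorem hasSum_choose_mul_pow_succ_div (n : ℕ) {x : ℝ} (hx : |x| < 1) :
    HasSum (fun i : ℕ ↦ ((i + 1 + n).choose n : ℝ) * x ^ (i + 1) / (i + 1))
      (-Real.log (1 - x) + ∑ k ∈ range n, (1 / (1 - x) ^ (k + 1) - 1) / (k + 1)) := by
  induction n with
  | zero => simpa using Real.hasSum_pow_div_log_of_abs_lt_one hx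
  | succ n ih =>
    rw [sum_range_succ, ← add_assoc]
    refine (ih.add (hasSum_choose_succ_mul_pow_succ_div n hx)).congr_fun fun i ↦ ?_
    rw [← add_assoc, Nat.choose_succ_succ]
    push_cast
    ring

theorem qseq_succ_eq_sum_range (m : ℕ) :
    qseq (m + 1) = ∑ k ∈ range m, ((2 : ℝ) ^ (k + 1) - 1) / (k + 1) := by
  rw [qseq, Nat.add_sub_cancel, ← Ico_add_one_right_eq_Icc, sum_Ico_eq_sum_range]
  simp [add_comm]

theorem stmt3 (n : ℕ) (hn : 1 ≤ n) :
    HasSum (fun i : ℕ => ((n + (i + 1) - 1).choose (n - 1) : ℝ) / ((i + 1 : ℕ) * 2 ^ (i + 1)))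
      (qseq n + Real.log 2) := by
  obtain ⟨m, rfl⟩ := Nat.exists_eq_add_of_le' hn
  have hseries := hasSum_choose_mul_pow_succ_div m (x := 1 / 2) (by norm_num [abs_of_pos])
  convert hseries using 1
  · ext i
    rw [show m + 1 + (i + 1) - 1 = i + 1 + m by omega, Nat.add_sub_cancel]
    push_cast
    rw [one_div_pow]
    field_simp
  · have hlog : -Real.log (1 - 1 / 2) = Real.log 2 := by
      rw [show (1 : ℝ) - 1 / 2 = 2⁻¹ by norm_num, Real.log_inv, neg_neg]
    rw [qseq_succ_eq_sum_range, add_comm, hlog]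
    norm_num [one_div_pow]
end

section
/- Assume: (i) Σ_{p ≤ x} 1/p − log(log x) converges to a limit M as x → ∞; (ii) for every integer i ≥ 1, Σ_{p ≤ x} (log p)^i/p − (log x)^i/i converges as x → ∞. Then Σ_{p ≤ √x} (log x)/(p·(log x − log p)) = log(log x) + M + o(1) as x → ∞. -/
/-!
For a prime `p ≤ √x` put `t = log p / log x ∈ [0, 1/2]`; the summand is `1 / (p (1 - t)) = ∑ₖ tᵏ / p`.
The terms with `k = 0` give `∑_{p ≤ √x} 1/p = log log x - log 2 + M + o(1)`. For `k ≥ 1`, hypothesis (ii)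
with `i = k`, read at `√x` and divided by `(log x)ᵏ`, gives `∑_{p ≤ √x} tᵏ / p → 2⁻ᵏ / k`. Since
`tᵏ⁺¹ ≤ 2⁻ᵏ t`, these sums are dominated by a geometric series, so their total tends to
`∑ₖ 2⁻ᵏ / k = log 2`, which cancels the `- log 2`.
-/

open Finset Filter

open Real Topology

noncomputable def logRatioSum (k : ℕ) (x : ℝ) : ℝ :=
  ∑ p ∈ primesUpTo (√x), (log p / log x) ^ k / p

lemma prime_and_le_of_mem_primesUpTo {y : ℝ} {p : ℕ} (hp : p ∈ primesUpTo y) :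
    p.Prime ∧ (p : ℝ) ≤ y := by
  simp only [primesUpTo, mem_filter, mem_range, Nat.lt_succ_iff] at hp
  exact ⟨hp.2, (Nat.le_floor_iff' hp.2.ne_zero).mp hp.1⟩

lemma log_le_half_log_of_mem_primesUpTo_sqrt {x : ℝ} (hx : 0 ≤ x) {p : ℕ}
    (hp : p ∈ primesUpTo (√x)) : 0 ≤ log p ∧ log p ≤ log x / 2 := by
  obtain ⟨hprime, hle⟩ := prime_and_le_of_mem_primesUpTo hp
  refine ⟨log_natCast_nonneg p, ?_⟩
  rw [← log_sqrt hx]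
  exact log_le_log (by exact_mod_cast hprime.pos) hle

lemma logRatio_mem_Icc {x : ℝ} (hx : 1 < x) {p : ℕ} (hp : p ∈ primesUpTo (√x)) :
    log p / log x ∈ Set.Icc 0 (1 / 2) := by
  have hL : 0 < log x := log_pos hx
  obtain ⟨h0, hhalf⟩ := log_le_half_log_of_mem_primesUpTo_sqrt (by linarith) hp
  exact ⟨div_nonneg h0 hL.le, by rw [div_le_iff₀ hL]; linarith⟩

lemma logRatioSum_nonneg {x : ℝ} (hx : 1 < x) (k : ℕ) : 0 ≤ logRatioSum k x :=
  sum_nonneg fun p hp => div_nonneg (pow_nonneg (logRatio_mem_Icc hx hp).1 k) p.cast_nonneg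

lemma logRatioSum_succ_le {x : ℝ} (hx : 1 < x) (k : ℕ) :
    logRatioSum (k + 1) x ≤ (1 / 2) ^ k * logRatioSum 1 x := by
  rw [logRatioSum, logRatioSum, mul_sum]
  refine sum_le_sum fun p hp => ?_
  obtain ⟨h0, hhalf⟩ := logRatio_mem_Icc hx hp
  rw [pow_succ, pow_one, mul_div_assoc]
  gcongr

lemma hasSum_pow_div_div_mul_sub {a L : ℝ} (c : ℝ) (ha : 0 ≤ a) (haL : a < L) :
    HasSum (fun k : ℕ => (a / L) ^ k / c) (L / (c * (L - a))) := by
  have hL : 0 < L := ha.trans_lt haL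
  have h := (hasSum_geometric_of_lt_one (div_nonneg ha hL.le) ((div_lt_one hL).2 haL)).div_const c
  rwa [one_sub_div hL.ne', inv_div, div_div, mul_comm (L - a)] at h

lemma hasSum_logRatioSum {x : ℝ} (hx : 1 < x) :
    HasSum (fun k => logRatioSum k x)
      (∑ p ∈ primesUpTo (√x), log x / (p * (log x - log p))) := by
  refine hasSum_sum fun p hp => ?_
  obtain ⟨h0, hhalf⟩ := log_le_half_log_of_mem_primesUpTo_sqrt (by linarith) hp
  exact hasSum_pow_div_div_mul_sub _ h0 (by linarith [log_pos hx])

lemma tendsto_logRatioSum {k : ℕ} (hk : k ≠ 0) {B : ℝ}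
    (hB : Tendsto (fun x : ℝ => (∑ p ∈ primesUpTo x, log p ^ k / p) - log x ^ k / k)
      atTop (𝓝 B)) :
    Tendsto (logRatioSum k) atTop (𝓝 ((1 / 2) ^ k / k)) := by
  have hinv : Tendsto (fun x => (log x ^ k)⁻¹) atTop (𝓝 0) :=
    ((tendsto_pow_atTop hk).comp tendsto_log_atTop).inv_tendsto_atTop
  have hlim := ((hB.comp tendsto_sqrt_atTop).mul hinv).add_const ((1 / 2 : ℝ) ^ k / k)
  rw [mul_zero, zero_add] at hlim
  refine hlim.congr' ?_
  filter_upwards [eventually_gt_atTop 1] with x hx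
  have hhalf : (log x / 2) ^ k / k * (log x ^ k)⁻¹ = (1 / 2) ^ k / k := by
    rw [div_eq_mul_one_div (log x), mul_pow]
    field_simp [(log_pos hx).ne']
  simp only [Function.comp_apply, logRatioSum, log_sqrt (by linarith : 0 ≤ x), sub_mul, hhalf,
    sub_add_cancel, sum_mul]
  refine sum_congr rfl fun p _ => ?_
  rw [div_pow]
  ring

lemma tsum_one_div_two_pow_succ_div : ∑' k : ℕ, (1 / 2 : ℝ) ^ (k + 1) / (k + 1) = log 2 := by
  rw [(hasSum_pow_div_log_of_abs_lt_one (by norm_num : |(1 / 2 : ℝ)| < 1)).tsum_eq,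
    show (1 : ℝ) - 1 / 2 = 2⁻¹ by norm_num, log_inv, neg_neg]

lemma tendsto_tsum_logRatioSum_succ
    (hlim : ∀ k ≠ 0, Tendsto (logRatioSum k) atTop (𝓝 ((1 / 2) ^ k / k))) :
    Tendsto (fun x => ∑' k, logRatioSum (k + 1) x) atTop (𝓝 (log 2)) := by
  rw [← tsum_one_div_two_pow_succ_div]
  refine tendsto_tsum_of_dominated_convergence summable_geometric_two
    (fun k => by simpa using hlim (k + 1) k.succ_ne_zero) ?_
  have hlt : ∀ᶠ x in atTop, logRatioSum 1 x < 1 :=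
    (hlim 1 one_ne_zero).eventually_lt_const (by norm_num)
  filter_upwards [hlt, eventually_gt_atTop 1] with x hlt hx k
  rw [norm_of_nonneg (logRatioSum_nonneg hx _)]
  calc logRatioSum (k + 1) x ≤ (1 / 2) ^ k * logRatioSum 1 x := logRatioSum_succ_le hx k
    _ ≤ (1 / 2) ^ k := mul_le_of_le_one_right (by positivity) hlt.le

lemma tendsto_logRatioSum_zero_sub_log_log {M : ℝ}
    (hM : Tendsto (fun x : ℝ => (∑ p ∈ primesUpTo x, (1 : ℝ) / p) - log (log x)) atTop (𝓝 M)) :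
    Tendsto (fun x => logRatioSum 0 x - log (log x)) atTop (𝓝 (M - log 2)) := by
  refine ((hM.comp tendsto_sqrt_atTop).sub_const (log 2)).congr' ?_
  filter_upwards [eventually_gt_atTop 1] with x hx
  rw [Function.comp_apply, log_sqrt (by linarith), log_div (log_pos hx).ne' two_ne_zero]
  simp only [logRatioSum, pow_zero]
  ring

theorem stmt8 (M : ℝ)
    (hM : Tendsto
      (fun x : ℝ => (∑ p ∈ primesUpTo x, (1 : ℝ) / (p : ℝ)) - Real.log (Real.log x))
      atTop (nhds M))
    (hBi : ∀ i : ℕ, 1 ≤ i → ∃ B : ℝ, Tendsto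
      (fun x : ℝ =>
        (∑ p ∈ primesUpTo x, (Real.log p) ^ i / (p : ℝ)) - (Real.log x) ^ i / (i : ℝ))
      atTop (nhds B)) :
    Tendsto
      (fun x : ℝ =>
        (∑ p ∈ primesUpTo (Real.sqrt x),
            Real.log x / ((p : ℝ) * (Real.log x - Real.log p)))
          - (Real.log (Real.log x) + M))
      atTop (nhds 0) := by
  have hlim : ∀ k ≠ 0, Tendsto (logRatioSum k) atTop (𝓝 ((1 / 2) ^ k / k)) := fun k hk =>
    (hBi k (Nat.one_le_iff_ne_zero.2 hk)).elim fun _ hB => tendsto_logRatioSum hk hB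
  have hsum := ((tendsto_logRatioSum_zero_sub_log_log hM).add
    (tendsto_tsum_logRatioSum_succ hlim)).sub_const M
  rw [sub_add_cancel, sub_self] at hsum
  refine hsum.congr' ?_
  filter_upwards [eventually_gt_atTop 1] with x hx
  have hsplit := (hasSum_logRatioSum hx).summable.tsum_eq_zero_add
  rw [(hasSum_logRatioSum hx).tsum_eq] at hsplit
  rw [hsplit]
  ring
end

section
/- For every integer n ≥ 1 and every real t with −1 < t < 1, the series Σ_{i=0}^∞ C(n+i, n−1)·t^{i+1}/(i+1) converges and equals −log(1−t) + Σ_{i=2}^{n} ((1−t)^{−(i−1)} − 1)/(i−1), where C(·,·) denotes the binomial coefficient. -/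
/-!
Pascal's rule `C(n+1+i, n) = C(n+i, n-1) + C(n+i, n)` splits the `(n+1)`-st series into
the `n`-th one plus `∑ C(n+i, n) tⁱ⁺¹/(i+1)`. Since `C(n+i, n)/(i+1) = C(i+n, n-1)/n`, the
latter is `(1/n) ∑_{j ≥ 1} C(j+n-1, n-1) tʲ = ((1-t)⁻ⁿ - 1)/n` by the negative binomial series, so
induction on `n`, starting from `-log (1-t) = ∑ tⁱ⁺¹/(i+1)`, gives the formula.
-/

open Finset

theorem Nat.choose_add_one_mul_add_one (k i : ℕ) :
    (k + 1 + i).choose (k + 1) * (k + 1) = (i + 1 + k).choose k * (i + 1) := by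
  rw [Nat.choose_succ_right_eq, show k + 1 + i - k = i + 1 by omega,
    show i + 1 + k = k + 1 + i by omega]

theorem hasSum_choose_mul_pow_succ_div_s10 {t : ℝ} (ht : |t| < 1) (k : ℕ) :
    HasSum (fun i : ℕ => ((k + 1 + i).choose (k + 1) : ℝ) * t ^ (i + 1) / ((i : ℝ) + 1))
      ((((1 - t) ^ (k + 1))⁻¹ - 1) / (k + 1)) := by
  have hgeom := hasSum_choose_mul_geometric_of_norm_lt_one (k := k) (r := t)
    (by rwa [Real.norm_eq_abs])
  have hshift := ((hasSum_nat_add_iff' 1).mpr hgeom).div_const ((k : ℝ) + 1)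
  simp only [range_one, sum_singleton, Nat.zero_add, Nat.choose_self, Nat.cast_one, pow_zero,
    mul_one, one_div] at hshift
  refine hshift.congr_fun fun i => ?_
  have hchoose :
      ((k + 1 + i).choose (k + 1) : ℝ) * (k + 1) = (i + 1 + k).choose k * (i + 1) := by
    exact_mod_cast Nat.choose_add_one_mul_add_one k i
  field_simp
  linear_combination t ^ (i + 1) * hchoose

theorem stmt10 (n : ℕ) (hn : 1 ≤ n) (t : ℝ) (ht1 : -1 < t) (ht2 : t < 1) :
    HasSum (fun i : ℕ => ((n + i).choose (n - 1) : ℝ) * t ^ (i + 1) / ((i : ℝ) + 1))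
      (-Real.log (1 - t)
        + ∑ i ∈ Finset.Icc 2 n, ((1 - t) ^ (-((i : ℤ) - 1)) - 1) / ((i : ℝ) - 1)) := by
  have ht : |t| < 1 := abs_lt.2 ⟨ht1, ht2⟩
  obtain ⟨k, rfl⟩ := Nat.exists_eq_add_of_le' hn
  clear hn
  induction k with
  | zero => simpa using Real.hasSum_pow_div_log_of_abs_lt_one ht
  | succ k ih =>
    have hpascal (i : ℕ) : (k + 1 + 1 + i).choose (k + 1) = (k + 1 + i).choose k
        + (k + 1 + i).choose (k + 1) := by
      rw [show k + 1 + 1 + i = k + 1 + i + 1 by omega, Nat.choose_succ_succ']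
    have hlast : ((1 - t) ^ (-(((k + 1 + 1 : ℕ) : ℤ) - 1)) - 1) / (((k + 1 + 1 : ℕ) : ℝ) - 1)
        = (((1 - t) ^ (k + 1))⁻¹ - 1) / (k + 1) := by
      push_cast
      rw [show ((k : ℤ) + 1 + 1 - 1) = ((k + 1 : ℕ) : ℤ) by push_cast; ring, zpow_neg,
        zpow_natCast]
      ring
    rw [sum_Icc_succ_top (by omega), hlast, ← add_assoc]
    refine (ih.add (hasSum_choose_mul_pow_succ_div_s10 ht k)).congr_fun fun i => ?_
    simp only [Nat.add_sub_cancel, hpascal]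
    push_cast
    ring
end

section
/- For all positive integers k and x, π_k(x) = Σ_{i=1}^{k} (−1)^{i−1} Σ_{p₁ < p₂ < … < p_i ≤ x^{1/k}} π_{k−i}(x/(p₁·p₂·…·p_i)), where the inner sum runs over all i-tuples of primes p₁ < p₂ < … < p_i with p_i ≤ x^{1/k}, and π₀ is the constant function 1. -/
/-
Every `m ≤ x` with `Ω m = k` has `(minFac m) ^ k ≤ m ≤ x`, so the set `D m` of its prime
factors below `x ^ (1 / k)` is nonempty, and it has at most `k` elements. Counting the pairs
`(m, S)` with `S ⊆ D m`, `#S = i`, with the sign `(-1) ^ (i - 1)`, every such `m` contributes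
`∑_{i=1}^{k} (-1) ^ (i - 1) * (#(D m)).choose i = 1`. On the other hand, for a fixed set `S`
of `i` primes with product `q ≤ x`, the `m ≤ x` with `Ω m = k` divisible by `q` are exactly the
`n * q` with `n ≤ x / q` and `Ω n = k - i`, of which there are `π_{k-i}(x / q)`.
-/

open Finset

/-- The `k`-almost-prime counting function `π_k(x)`: for `k ≥ 1` the number of
`m ≤ x` with exactly `k` prime factors counted with multiplicity (`Ω(m) = k`),
and `π₀(x) = 1` identically. -/
noncomputable def piK (k : ℕ) (x : ℝ) : ℕ :=
  if k = 0 then 1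
  else ((Finset.range (⌊x⌋₊ + 1)).filter
    (fun m => ArithmeticFunction.cardFactors m = k)).card

open ArithmeticFunction
open scoped ArithmeticFunction.Omega

theorem Int.sum_Icc_neg_one_pow_mul_choose {d k : ℕ} (hd : d ≠ 0) (hdk : d ≤ k) :
    ∑ i ∈ Icc 1 k, (-1 : ℤ) ^ (i - 1) * d.choose i = 1 := by
  obtain ⟨d, rfl⟩ := Nat.exists_eq_succ_of_ne_zero hd
  have h := Int.alternating_sum_range_choose_eq_choose (n := d) (m := k)
  rw [Nat.choose_eq_zero_of_lt (by omega), Nat.cast_zero, mul_zero, sum_range_succ'] at h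
  have hshift (i : ℕ) : (-1 : ℤ) ^ (1 + i - 1) * (d + 1).choose (1 + i)
      = -((-1) ^ (i + 1) * (d + 1).choose (i + 1)) := by
    rw [add_comm 1 i, Nat.add_sub_cancel, pow_succ]; ring
  rw [← Ico_add_one_right_eq_Icc, sum_Ico_eq_sum_range, Nat.add_sub_cancel,
    sum_congr rfl fun i _ => hshift i, sum_neg_distrib]
  simp only [pow_zero, Nat.choose_zero_right, Nat.cast_one, mul_one] at h
  linarith

namespace Finset

variable {α β : Type*} [DecidableEq β]

theorem sum_powersetCard_card_filter_subset (A : Finset α) (P : Finset β) (D : α → Finset β)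
    (i : ℕ) :
    ∑ S ∈ P.powersetCard i, #{a ∈ A | S ⊆ D a} = ∑ a ∈ A, (#(P ∩ D a)).choose i := by
  simp_rw [card_filter]
  rw [sum_comm]
  refine sum_congr rfl fun a _ => ?_
  rw [← card_filter, ← card_powersetCard]
  congr 1
  ext S
  simp only [mem_filter, mem_powersetCard, subset_inter_iff]
  tauto

theorem card_eq_alternating_sum_card_filter_subset {R : Type*} [CommRing R] (A : Finset α)
    (P : Finset β) (D : α → Finset β) {k : ℕ}
    (h : ∀ a ∈ A, (P ∩ D a).Nonempty ∧ #(P ∩ D a) ≤ k) :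
    (#A : R) = ∑ i ∈ Icc 1 k, (-1) ^ (i - 1) *
      ∑ S ∈ P.powersetCard i, (#{a ∈ A | S ⊆ D a} : R) := by
  simp_rw [← Nat.cast_sum, sum_powersetCard_card_filter_subset, Nat.cast_sum, mul_sum]
  rw [sum_comm, card_eq_sum_ones, Nat.cast_sum]
  refine sum_congr rfl fun a ha => ?_
  have := congrArg (Int.cast : ℤ → R)
    (Int.sum_Icc_neg_one_pow_mul_choose (h a ha).1.card_pos.ne' (h a ha).2)
  push_cast at this
  rw [Nat.cast_one, this]

end Finset

namespace Nat

theorem prod_dvd_iff_subset_primeFactors {S : Finset ℕ} {m : ℕ} (hS : ∀ p ∈ S, p.Prime)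
    (hm : m ≠ 0) : ∏ p ∈ S, p ∣ m ↔ S ⊆ m.primeFactors := by
  refine ⟨fun h => primeFactors_prod hS ▸ primeFactors_mono h hm, fun h => ?_⟩
  exact (prod_dvd_prod_of_subset _ _ _ h).trans m.prod_primeFactors_dvd

theorem cardFactors_prod_primes {S : Finset ℕ} (hS : ∀ p ∈ S, p.Prime) :
    Ω (∏ p ∈ S, p) = #S := by
  rw [prod_eq_multiset_prod,
    cardFactors_multiset_prod (prod_ne_zero_iff.2 fun p hp => (hS p hp).ne_zero)]
  simp [Multiset.map_congr rfl fun p hp => cardFactors_apply_prime (hS p hp)]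

theorem card_primeFactors_le_cardFactors (m : ℕ) : #m.primeFactors ≤ Ω m :=
  cardFactors_apply (n := m) ▸ List.toFinset_card_le _

theorem minFac_pow_cardFactors_le {m : ℕ} (hm : m ≠ 0) : m.minFac ^ Ω m ≤ m := by
  conv_rhs => rw [← prod_primeFactorsList hm]
  rw [cardFactors_apply]
  exact List.pow_card_le_prod _ _ fun p hp =>
    minFac_le_of_dvd (prime_of_mem_primeFactorsList hp).two_le (dvd_of_mem_primeFactorsList hp)

theorem card_filter_dvd_cardFactors_eq {q : ℕ} (x k : ℕ) (hq : q ≠ 0) (hqk : Ω q ≤ k) :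
    #{m ∈ Icc 1 x | q ∣ m ∧ Ω m = k} = #{n ∈ Icc 1 (x / q) | Ω n = k - Ω q} := by
  symm
  refine card_nbij' (· * q) (· / q) ?_ ?_ ?_ ?_
  · intro n hn
    simp only [coe_filter, mem_Icc, Set.mem_ofPred_eq] at hn ⊢
    obtain ⟨⟨hn1, hnx⟩, hΩ⟩ := hn
    refine ⟨⟨one_le_iff_ne_zero.2 (mul_ne_zero (by omega) hq),
      (le_div_iff_mul_le (by omega)).1 hnx⟩, dvd_mul_left q n, ?_⟩
    rw [cardFactors_mul (by omega) hq]
    omega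
  · intro m hm
    simp only [coe_filter, mem_Icc, Set.mem_ofPred_eq] at hm ⊢
    obtain ⟨⟨hm1, hmx⟩, hqm, hΩ⟩ := hm
    have hmq : m / q * q = m := Nat.div_mul_cancel hqm
    have hmq0 : m / q ≠ 0 := by rintro h; rw [h, zero_mul] at hmq; omega
    refine ⟨⟨one_le_iff_ne_zero.2 hmq0, Nat.div_le_div_right hmx⟩, ?_⟩
    rw [← hmq, cardFactors_mul hmq0 hq] at hΩ
    omega
  · intro n _
    exact Nat.mul_div_cancel n (by omega)
  · intro m hm
    simp only [coe_filter, Set.mem_ofPred_eq] at hm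
    exact Nat.div_mul_cancel hm.2.1

end Nat

theorem piK_natCast_of_ne_zero {k : ℕ} (x : ℕ) (hk : k ≠ 0) :
    piK k x = #{m ∈ Icc 1 x | Ω m = k} := by
  rw [piK, if_neg hk, Nat.floor_natCast]
  congr 1
  ext m
  simp only [mem_filter, mem_range, mem_Icc]
  constructor
  · rintro ⟨hmx, rfl⟩
    refine ⟨⟨Nat.one_le_iff_ne_zero.2 ?_, by omega⟩, rfl⟩
    rintro rfl
    exact hk cardFactors_zero
  · rintro ⟨⟨_, hmx⟩, hΩ⟩
    exact ⟨by omega, hΩ⟩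

theorem piK_natCast {x : ℕ} (k : ℕ) (hx : x ≠ 0) : piK k x = #{m ∈ Icc 1 x | Ω m = k} := by
  rcases eq_or_ne k 0 with rfl | hk
  · rw [piK, if_pos rfl, eq_comm, card_eq_one]
    refine ⟨1, eq_singleton_iff_unique_mem.2 ⟨by simp; omega, fun m hm => ?_⟩⟩
    simp only [mem_filter, mem_Icc, cardFactors_eq_zero_iff_eq_zero_or_one] at hm
    omega
  · exact piK_natCast_of_ne_zero x hk

theorem piK_div_natCast (k x q : ℕ) : piK k ((x : ℝ) / q) = piK k (x / q : ℕ) := by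
  simp only [piK, Nat.floor_div_eq_div, Nat.floor_natCast]

theorem mem_primesUpTo_rpow_one_div {k x p : ℕ} (hk : k ≠ 0) :
    p ∈ primesUpTo ((x : ℝ) ^ ((1 : ℝ) / k)) ↔ p.Prime ∧ p ^ k ≤ x := by
  rw [primesUpTo, mem_filter, mem_range, Nat.lt_succ_iff, Nat.le_floor_iff (by positivity),
    one_div, Real.le_rpow_inv_iff_of_pos (by positivity) (by positivity) (by positivity),
    Real.rpow_natCast, and_comm]
  norm_cast

theorem prod_le_of_forall_pow_le {S : Finset ℕ} {k x : ℕ} (hS : S.Nonempty) (hS0 : 0 ∉ S)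
    (hSk : #S ≤ k) (h : ∀ p ∈ S, p ^ k ≤ x) : ∏ p ∈ S, p ≤ x :=
  calc ∏ p ∈ S, p ≤ S.max' hS ^ #S := prod_le_pow_card _ _ _ fun p hp => le_max' S p hp
    _ ≤ S.max' hS ^ k := Nat.pow_le_pow_right
        (Nat.pos_of_ne_zero fun h0 => hS0 (h0 ▸ max'_mem S hS)) hSk
    _ ≤ x := h _ (max'_mem S hS)

theorem piK_sub_card_div_prod_eq_card {k x : ℕ} {S : Finset ℕ} (hS : ∀ p ∈ S, p.Prime)
    (hSk : #S ≤ k) (hSx : ∏ p ∈ S, p ≤ x) :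
    piK (k - #S) ((x : ℝ) / ∏ p ∈ S, (p : ℝ)) =
      #{m ∈ Icc 1 x | Ω m = k ∧ S ⊆ m.primeFactors} := by
  have hq : ∏ p ∈ S, p ≠ 0 := prod_ne_zero_iff.2 fun p hp => (hS p hp).ne_zero
  have hΩ := Nat.cardFactors_prod_primes hS
  rw [← Nat.cast_prod, piK_div_natCast,
    piK_natCast _ (Nat.div_pos hSx (Nat.pos_of_ne_zero hq)).ne', ← hΩ,
    ← Nat.card_filter_dvd_cardFactors_eq x k hq (hΩ ▸ hSk)]
  refine congrArg card (filter_congr fun m hm => ?_)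
  rw [Nat.prod_dvd_iff_subset_primeFactors hS (by simp only [mem_Icc] at hm; omega), and_comm]

theorem stmt14_general (k x : ℕ) (hk : 0 < k) :
    (piK k x : ℝ) =
      ∑ i ∈ Finset.Icc 1 k, (-1 : ℝ) ^ (i - 1) *
        ∑ s ∈ (primesUpTo ((x : ℝ) ^ ((1 : ℝ) / (k : ℝ)))).powersetCard i,
          (piK (k - i) ((x : ℝ) / ∏ p ∈ s, (p : ℝ)) : ℝ) := by
  set P := primesUpTo ((x : ℝ) ^ ((1 : ℝ) / (k : ℝ)))
  have mem_P (p : ℕ) : p ∈ P ↔ p.Prime ∧ p ^ k ≤ x := mem_primesUpTo_rpow_one_div hk.ne'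
  have small_factors (m : ℕ) (hm : m ∈ ({m ∈ Icc 1 x | Ω m = k} : Finset ℕ)) :
      (P ∩ m.primeFactors).Nonempty ∧ #(P ∩ m.primeFactors) ≤ k := by
    simp only [mem_filter, mem_Icc] at hm
    obtain ⟨⟨hm1, hmx⟩, hΩ⟩ := hm
    have hp : m.minFac.Prime := Nat.minFac_prime fun h => by simp [h] at hΩ; omega
    refine ⟨⟨m.minFac, mem_inter.2 ⟨(mem_P _).2 ⟨hp, ?_⟩,
      Nat.mem_primeFactors.2 ⟨hp, m.minFac_dvd, by omega⟩⟩⟩, ?_⟩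
    · exact hΩ ▸ (Nat.minFac_pow_cardFactors_le (by omega)).trans hmx
    · exact hΩ ▸ (card_le_card inter_subset_right).trans
        (Nat.card_primeFactors_le_cardFactors m)
  rw [piK_natCast_of_ne_zero x hk.ne',
    card_eq_alternating_sum_card_filter_subset (R := ℝ) _ P _ small_factors]
  refine sum_congr rfl fun i hi => congrArg _ (sum_congr rfl fun S hS => ?_)
  obtain ⟨hSP, rfl⟩ := mem_powersetCard.1 hS
  obtain ⟨hS1, hSk⟩ := mem_Icc.1 hi
  have hSprime (p : ℕ) (hp : p ∈ S) : p.Prime := ((mem_P p).1 (hSP hp)).1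
  have hSx : ∏ p ∈ S, p ≤ x := prod_le_of_forall_pow_le (card_pos.1 hS1)
    (fun h0 => Nat.not_prime_zero (hSprime 0 h0)) hSk fun p hp => ((mem_P p).1 (hSP hp)).2
  rw [piK_sub_card_div_prod_eq_card hSprime hSk hSx, filter_filter]

theorem stmt14 (k x : ℕ) (hk : 0 < k) (hx : 0 < x) :
    (piK k x : ℝ) =
      ∑ i ∈ Finset.Icc 1 k, (-1 : ℝ) ^ (i - 1) *
        ∑ s ∈ (primesUpTo ((x : ℝ) ^ ((1 : ℝ) / (k : ℝ)))).powersetCard i,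
          (piK (k - i) ((x : ℝ) / ∏ p ∈ s, (p : ℝ)) : ℝ) :=
  stmt14_general k x hk
end

section
/- For every integer n ≥ 1, (2^n/n)·Σ_{i=0}^{n−1} 1/C(n−1, i) = Σ_{i=1}^{n} 2^i/i; equivalently, 2^n·Σ_{i=1}^{n} (i−1)!·(n−i)! = n!·Σ_{i=1}^{n} 2^i/i. -/
/-! With `F n = ∑_{i=0}^{n} i! (n-i)!`, writing `2 F (n+1)` as the sum of two copies of
`F (n+1)`, one with its last and one with its first term peeled off, and pairing terms gives
`2 F (n+1) = (n+2) F n + 2 (n+1)!`. Hence `2^(n+1) F n / (n+1)!` grows by exactly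
`2^(n+2) / (n+2)` from `n` to `n+1`, which is the second identity; the first follows from it
since `1 / C(n, i) = i! (n-i)! / n!`. -/

open Finset Nat

def factorialConvolution (n : ℕ) : ℕ := ∑ i ∈ range (n + 1), i ! * (n - i)!

lemma two_mul_factorialConvolution_succ (n : ℕ) :
    2 * factorialConvolution (n + 1) = (n + 2) * factorialConvolution n + 2 * (n + 1)! := by
  have hpair (i : ℕ) (hi : i ∈ range (n + 1)) :
      i ! * (n + 1 - i)! + (i + 1)! * (n + 1 - (i + 1))! = (n + 2) * (i ! * (n - i)!) := by
    rw [Nat.succ_sub (by simpa [Nat.lt_succ_iff] using hi), Nat.add_sub_add_right,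
      factorial_succ (n - i), factorial_succ i]
    have hfactors : n - i + 1 + (i + 1) = n + 2 := by have := mem_range.mp hi; omega
    rw [← hfactors]; ring
  calc 2 * factorialConvolution (n + 1)
      = ∑ i ∈ range (n + 1), i ! * (n + 1 - i)! + (n + 1)!
        + (∑ i ∈ range (n + 1), (i + 1)! * (n + 1 - (i + 1))! + (n + 1)!) := by
        unfold factorialConvolution
        rw [two_mul]
        congr 1
        · rw [sum_range_succ]; simp
        · rw [sum_range_succ']; simp
    _ = ∑ i ∈ range (n + 1), (n + 2) * (i ! * (n - i)!) + 2 * (n + 1)! := by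
        rw [← sum_congr rfl hpair, sum_add_distrib]; ring
    _ = (n + 2) * factorialConvolution n + 2 * (n + 1)! := by
        rw [← mul_sum]; rfl

lemma sum_Icc_factorial_pred_mul_factorial (n : ℕ) :
    ∑ i ∈ Icc 1 (n + 1), (i - 1)! * (n + 1 - i)! = factorialConvolution n := by
  rw [factorialConvolution, range_eq_Ico, ← Ico_add_one_right_eq_Icc, ← sum_Ico_add' _ 0 (n + 1) 1]
  simp

section Field

variable {K : Type*} [Field K] [CharZero K]

lemma two_pow_mul_factorialConvolution (n : ℕ) :
    (2 : K) ^ (n + 1) * factorialConvolution n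
      = (n + 1)! * ∑ i ∈ Icc 1 (n + 1), (2 : K) ^ i / i := by
  induction n with
  | zero => norm_num [factorialConvolution]
  | succ n ih =>
    have hrec : (2 : K) * factorialConvolution (n + 1)
        = (n + 2) * factorialConvolution n + 2 * (n + 1)! := by
      exact_mod_cast congrArg (Nat.cast : ℕ → K) (two_mul_factorialConvolution_succ n)
    rw [sum_Icc_succ_top (by omega), mul_add, factorial_succ (n + 1), Nat.cast_mul, mul_assoc,
      ← ih, pow_succ, mul_assoc, hrec]
    have hn2 : (n : K) + 1 + 1 ≠ 0 := by exact_mod_cast (n + 1).succ_ne_zero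
    push_cast
    field_simp
    ring

lemma sum_range_one_div_choose (n : ℕ) :
    ∑ i ∈ range (n + 1), (1 : K) / n.choose i = factorialConvolution n / n ! := by
  rw [factorialConvolution, Nat.cast_sum, sum_div]
  refine sum_congr rfl fun i hi => ?_
  rw [cast_choose K (Nat.lt_succ_iff.mp (mem_range.mp hi)), one_div_div, Nat.cast_mul]

end Field

theorem stmt18 (n : ℕ) (hn : 1 ≤ n) :
    ((2 : ℝ) ^ n / (n : ℝ)) *
        ∑ i ∈ Finset.range n, (1 : ℝ) / ((n - 1).choose i : ℝ)
      = ∑ i ∈ Finset.Icc 1 n, (2 : ℝ) ^ i / (i : ℝ)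
    ∧ (2 : ℝ) ^ n *
        ∑ i ∈ Finset.Icc 1 n, (Nat.factorial (i - 1) : ℝ) * (Nat.factorial (n - i) : ℝ)
      = (Nat.factorial n : ℝ) * ∑ i ∈ Finset.Icc 1 n, (2 : ℝ) ^ i / (i : ℝ) := by
  obtain ⟨m, rfl⟩ := Nat.exists_eq_add_of_le' hn
  have hclosed := two_pow_mul_factorialConvolution (K := ℝ) m
  constructor
  · rw [Nat.add_sub_cancel, sum_range_one_div_choose]
    rw [factorial_succ] at hclosed
    push_cast at hclosed ⊢
    field_simp
    linear_combination hclosed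
  · rw [← hclosed, ← sum_Icc_factorial_pred_mul_factorial]
    push_cast
    rfl
end
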